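/- Define W(E) = (2/ℓ + (2πβ)^{-1/2})^d · (2πC)^{-1/2} · b⁻¹ · exp(βE + β²C_ℓ/2) with constants ℓ, β, C, b, C_ℓ > 0 and choosing β = (2C_ℓ)⁻¹(√(E² + 2dC_ℓ) − E) with ℓ fixed. Then as E → −∞, (ln W(E))/E² → −1/(2C_ℓ). -/

import Mathlib

/-!
As `E → -∞` the chosen `β(E)` behaves like `-E / Cl`; in particular `β → ∞`, so the prefactor
`(2/ℓ + (2πβ)^{-1/2})^d (2πC)^{-1/2} b⁻¹` tends to the positive constant `(2/ℓ)^d (2πC)^{-1/2} b⁻¹`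
and its logarithm is `o(E²)`. Writing `β = r E` with `r → -1/Cl`, the exponent is
`β E + β² Cl / 2 = (r + r² Cl / 2) E²`, and `r + r² Cl / 2 → -1/(2 Cl)`.
-/

open Filter Topology Real

lemma tendsto_sq_atBot_atTop : Tendsto (fun E : ℝ => E ^ 2) atBot atTop :=
  ((tendsto_pow_atTop two_ne_zero).comp tendsto_neg_atBot_atTop).congr fun E => neg_sq E

lemma tendsto_sqrt_sq_add_div_self_atBot (c : ℝ) :
    Tendsto (fun E : ℝ => √(E ^ 2 + c) / E) atBot (𝓝 (-1)) := by
  have hroot : Tendsto (fun E : ℝ => √(1 + c / E ^ 2)) atBot (𝓝 1) := by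
    have h := ((tendsto_const_nhds (x := c)).div_atTop tendsto_sq_atBot_atTop).const_add 1
    rw [add_zero] at h
    exact (continuous_sqrt.tendsto' 1 1 sqrt_one).comp h
  refine hroot.neg.congr' ?_
  filter_upwards [eventually_lt_atBot 0] with E hE
  have hfactor : E ^ 2 + c = E ^ 2 * (1 + c / E ^ 2) := by field_simp [hE.ne]
  rw [hfactor, sqrt_mul (sq_nonneg E), sqrt_sq_eq_abs, abs_of_neg hE, neg_mul,
    neg_div, mul_div_cancel_left₀ _ hE.ne]

/-- The positive root of `Cl β² + E β - d / 2 = 0`, i.e. the critical point of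
`β ↦ β E + β² Cl / 2 - (d / 2) log β`, the logarithm of `exp (β E + β² Cl / 2) β^{-d/2}`. -/
noncomputable def optimalBeta (d : ℕ) (Cl E : ℝ) : ℝ :=
  (2 * Cl)⁻¹ * (√(E ^ 2 + 2 * d * Cl) - E)

section optimalBeta

variable (d : ℕ) {Cl : ℝ}

lemma tendsto_optimalBeta_div_self_atBot :
    Tendsto (fun E => optimalBeta d Cl E / E) atBot (𝓝 (-Cl⁻¹)) := by
  have h := ((tendsto_sqrt_sq_add_div_self_atBot (2 * d * Cl)).sub_const 1).const_mul (2 * Cl)⁻¹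
  convert h.congr' _ using 2
  · rw [mul_inv]; ring
  filter_upwards [eventually_ne_atBot 0] with E hE
  rw [optimalBeta, mul_div_assoc, sub_div, div_self hE]

lemma tendsto_optimalBeta_atTop (hCl : 0 < Cl) :
    Tendsto (optimalBeta d Cl) atBot atTop := by
  refine ((tendsto_optimalBeta_div_self_atBot d).neg_mul_atBot (by simpa using hCl)
    tendsto_id).congr' ?_
  filter_upwards [eventually_ne_atBot 0] with E hE
  exact div_mul_cancel₀ _ hE

lemma tendsto_optimalBeta_exponent_div_sq (hCl : Cl ≠ 0) :
    Tendsto (fun E => (optimalBeta d Cl E * E + optimalBeta d Cl E ^ 2 * Cl / 2) / E ^ 2)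
      atBot (𝓝 (-(1 / (2 * Cl)))) := by
  have hr := tendsto_optimalBeta_div_self_atBot d (Cl := Cl)
  convert (hr.add ((hr.pow 2).mul_const Cl |>.div_const 2)).congr' _ using 2
  · field_simp; ring
  filter_upwards [eventually_ne_atBot 0] with E hE
  field_simp

end optimalBeta

lemma tendsto_log_mul_exp_div {α : Type*} {l : Filter α} {P Q g : α → ℝ} {p q : ℝ}
    (hp : p ≠ 0) (hP : Tendsto P l (𝓝 p)) (hQ : Tendsto (fun x => Q x / g x) l (𝓝 q))
    (hg : Tendsto g l atTop) :
    Tendsto (fun x => log (P x * exp (Q x)) / g x) l (𝓝 q) := by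
  have hlogP : Tendsto (fun x => log (P x) / g x) l (𝓝 0) :=
    ((continuousAt_log hp).tendsto.comp hP).div_atTop hg
  refine (zero_add q ▸ hlogP.add hQ).congr' ?_
  filter_upwards [hP.eventually_ne hp] with x hx
  rw [log_mul hx (exp_ne_zero _), log_exp, add_div]

lemma tendsto_wegner_prefactor {ℓ C b : ℝ} (d : ℕ) {β : ℝ → ℝ} {l : Filter ℝ}
    (hβ : Tendsto β l atTop) :
    Tendsto (fun E => (2 / ℓ + (√(2 * π * β E))⁻¹) ^ d * (√(2 * π * C))⁻¹ * b⁻¹) l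
      (𝓝 ((2 / ℓ) ^ d * (√(2 * π * C))⁻¹ * b⁻¹)) := by
  have hvanish : Tendsto (fun E => (√(2 * π * β E))⁻¹) l (𝓝 0) :=
    tendsto_inv_atTop_zero.comp (tendsto_sqrt_atTop.comp (hβ.const_mul_atTop (by positivity)))
  simpa using (((hvanish.const_add (2 / ℓ)).pow d).mul_const _).mul_const _

/-- low-energy asymptotics of the Wegner bound
`W(E) = (2/ℓ + (2πβ)^{-1/2})^d (2πC)^{-1/2} b⁻¹ exp(βE + β²C_ℓ/2)` with the
variational choice `β(E) = (2C_ℓ)⁻¹(√(E² + 2dC_ℓ) − E)`: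
`(ln W(E))/E² → −1/(2C_ℓ)` as `E → −∞`. -/
theorem wegner_bound_low_energy_asymptotics
    (d : ℕ) (ℓ C b Cl : ℝ) (hℓ : 0 < ℓ) (hC : 0 < C) (hb : 0 < b) (hCl : 0 < Cl) :
    Tendsto (fun E : ℝ =>
        Real.log
          ((2 / ℓ + (Real.sqrt (2 * π *
              ((2 * Cl)⁻¹ * (Real.sqrt (E ^ 2 + 2 * d * Cl) - E))))⁻¹) ^ d *
            (Real.sqrt (2 * π * C))⁻¹ * b⁻¹ *
            Real.exp ((2 * Cl)⁻¹ * (Real.sqrt (E ^ 2 + 2 * d * Cl) - E) * E +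
              ((2 * Cl)⁻¹ * (Real.sqrt (E ^ 2 + 2 * d * Cl) - E)) ^ 2 * Cl / 2))
          / E ^ 2)
      atBot (nhds (-(1 / (2 * Cl)))) := by
  have hlimit : (2 / ℓ) ^ d * (√(2 * π * C))⁻¹ * b⁻¹ ≠ 0 := by positivity
  exact tendsto_log_mul_exp_div hlimit
    (tendsto_wegner_prefactor d (tendsto_optimalBeta_atTop d hCl))
    (tendsto_optimalBeta_exponent_div_sq d hCl.ne') tendsto_sq_atBot_atTop
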